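/- arXiv:1311.5004 — 4 statements merged into one kernel-verified Lean document; each statement's English description precedes it below -/
import Mathlib

section
/- Let K ∈ (-1,1), b : ℝ → ℝ satisfy b' = √(1 - K cos(2b)), b(0) = 0, and let W > 0 satisfy b(W) = π. Then for all v ∈ ℝ, b(v + W) = b(v) + π. -/
/-!
The field `F y = √(1 - K cos 2y)` is `π`-periodic, and for `|K| < 1` it is Lipschitz because the
radicand stays above `1 - |K| > 0`. Periodicity makes `v ↦ b (v + W) - π` a second solution of
`b' = F b`, with the same value `0` at `v = 0`; uniqueness for Lipschitz fields identifies it with `b`.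
-/

open Real Function

theorem abs_sqrt_sub_sqrt_le {a b c : ℝ} (hc : 0 < c) (ha : c ≤ a) (hb : c ≤ b) :
    |√a - √b| ≤ |a - b| / (2 * √c) := by
  have hca : √c ≤ √a := sqrt_le_sqrt ha
  have hcb : √c ≤ √b := sqrt_le_sqrt hb
  have hsum : 0 < √a + √b := by linarith [sqrt_pos.2 hc]
  have hfactor : |√a - √b| * (√a + √b) = |a - b| := by
    rw [← abs_of_pos hsum, ← abs_mul]
    congr 1
    linear_combination sq_sqrt (hc.le.trans ha) - sq_sqrt (hc.le.trans hb)
  rw [le_div_iff₀ (by positivity), ← hfactor]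
  gcongr
  linarith

theorem LipschitzWith.sqrt_of_le {α : Type*} [PseudoMetricSpace α] {f : α → ℝ} {L : NNReal}
    {c : ℝ} (hf : LipschitzWith L f) (hc : 0 < c) (hfc : ∀ x, c ≤ f x) :
    LipschitzWith (Real.toNNReal (L / (2 * √c))) fun x => √(f x) :=
  LipschitzWith.of_dist_le' fun x y =>
    calc dist √(f x) √(f y) ≤ dist (f x) (f y) / (2 * √c) :=
          abs_sqrt_sub_sqrt_le hc (hfc x) (hfc y)
      _ ≤ L * dist x y / (2 * √c) := by gcongr; exact hf.dist_le_mul x y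
      _ = L / (2 * √c) * dist x y := by ring

theorem exists_lipschitzWith_sqrt_one_sub_mul_cos_two_mul {K : ℝ} (hK : |K| < 1) :
    ∃ L, LipschitzWith L fun y : ℝ => √(1 - K * cos (2 * y)) := by
  have hlip : LipschitzWith (Real.toNNReal (2 * |K|)) fun y : ℝ => 1 - K * cos (2 * y) :=
    LipschitzWith.of_dist_le' fun x y =>
      calc dist (1 - K * cos (2 * x)) (1 - K * cos (2 * y))
          = |K| * |cos (2 * x) - cos (2 * y)| := by
            rw [Real.dist_eq, ← abs_mul, ← abs_neg]; congr 1; ring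
        _ ≤ |K| * |2 * x - 2 * y| := by gcongr ?_ * ?_; exact abs_cos_sub_cos_le _ _
        _ = 2 * |K| * dist x y := by
            rw [Real.dist_eq, ← mul_sub, abs_mul, abs_two]; ring
  have hbound (y : ℝ) : 1 - |K| ≤ 1 - K * cos (2 * y) := by
    have : K * cos (2 * y) ≤ |K| := (le_abs_self _).trans <| by
      rw [abs_mul]; exact mul_le_of_le_one_right (abs_nonneg K) (abs_cos_le_one _)
    linarith
  exact ⟨_, hlip.sqrt_of_le (by linarith) hbound⟩

section PeriodicField

variable {E : Type*} [NormedAddCommGroup E] [NormedSpace ℝ E] {F : E → E} {f : ℝ → E} {p : E}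

theorem Function.Periodic.hasDerivAt_comp_add_const_sub (hF : Periodic F p)
    (hf : ∀ t, HasDerivAt f (F (f t)) t) (W t : ℝ) :
    HasDerivAt (fun s => f (s + W) - p) (F (f (t + W) - p)) t := by
  rw [hF.sub_eq]
  exact ((hf (t + W)).comp_add_const t W).sub_const p

theorem Function.Periodic.ode_solution_add_of_lipschitzWith {L : NNReal} (hlip : LipschitzWith L F)
    (hF : Periodic F p) (hf : ∀ t, HasDerivAt f (F (f t)) t) {W : ℝ} (hW : f W = f 0 + p)
    (v : ℝ) : f (v + W) = f v + p := by
  have hshift : (fun s => f (s + W) - p) = f :=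
    ODE_solution_unique_univ (v := fun _ => F) (s := fun _ => Set.univ) (t₀ := 0)
      (fun _ => hlip.lipschitzOnWith)
      (fun t => ⟨hF.hasDerivAt_comp_add_const_sub hf W t, Set.mem_univ _⟩)
      (fun t => ⟨hf t, Set.mem_univ _⟩) (by simp [hW])
  rw [← congrFun hshift v, sub_add_cancel]

end PeriodicField

theorem helicoid_b_quasiperiodic_general
    (K : ℝ) (hK : K ∈ Set.Ioo (-1 : ℝ) 1) (b : ℝ → ℝ)
    (hb : ∀ v : ℝ, HasDerivAt b (Real.sqrt (1 - K * Real.cos (2 * b v))) v)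
    (hb0 : b 0 = 0) (W : ℝ) (hbW : b W = Real.pi) :
    ∀ v : ℝ, b (v + W) = b v + Real.pi := by
  obtain ⟨L, hlip⟩ := exists_lipschitzWith_sqrt_one_sub_mul_cos_two_mul (abs_lt.2 hK)
  have hper : Periodic (fun y : ℝ => √(1 - K * cos (2 * y))) π := fun y => by
    simp only [mul_add, cos_add_two_pi]
  exact hper.ode_solution_add_of_lipschitzWith hlip hb (by rw [hbW, hb0, zero_add])

theorem helicoid_b_quasiperiodic
    (K : ℝ) (hK : K ∈ Set.Ioo (-1 : ℝ) 1) (b : ℝ → ℝ)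
    (hb : ∀ v : ℝ, HasDerivAt b (Real.sqrt (1 - K * Real.cos (2 * b v))) v)
    (hb0 : b 0 = 0) (W : ℝ) (hW : 0 < W) (hbW : b W = Real.pi) :
    ∀ v : ℝ, b (v + W) = b v + Real.pi :=
  helicoid_b_quasiperiodic_general K hK b hb hb0 W hbW
end

section
/- For each K ∈ [0,1), define P(K) = 2K ∫₀^π du / (√(1 - K cos 2u) · (1 + √(1 - K cos 2u))). Then P is strictly increasing on [0,1), P(0) = 0, and P(K) → +∞ as K → 1⁻; hence P is a bijection from [0,1) onto [0,+∞). -/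
/-!
Write `s = √(1 - K c)` with `c = cos 2u`. Since `K c = 1 - s²`, the integrand `K / (s (1 + s))`
of `helicoidPeriod` satisfies
`K₂ / (s₂ (1 + s₂)) - K₁ / (s₁ (1 + s₁)) = (K₂ - K₁) / (s₁ s₂ (s₁ + s₂))`,
so it is strictly increasing in `K` for every `u`, and so is the period.

As `K → 1⁻` the integrand blows up at `u = 0`: from `sin u ≤ u` we get
`√(1 - K cos 2u) ≤ √(1 - K) + √2 u`, so the integral is at least a multiple of
`∫₀^π du / (√(1 - K) + √2 u)`, which grows like `-log √(1 - K)`. The period is continuous on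
`(-1, 1)`, and the intermediate value theorem gives surjectivity onto `[0, ∞)`.
-/

open Real Set

/-- The period `2x₃(W)` of the helicoid `H_K` in Sol₃, as a function of `K`. -/
noncomputable def helicoidPeriod (K : ℝ) : ℝ :=
  2 * K * ∫ u in (0 : ℝ)..Real.pi,
    1 / (Real.sqrt (1 - K * Real.cos (2 * u)) * (1 + Real.sqrt (1 - K * Real.cos (2 * u))))

open Filter Topology intervalIntegral

noncomputable def periodKernel (x : ℝ) : ℝ := 1 / (√x * (1 + √x))

theorem helicoidPeriod_eq_mul_integral (K : ℝ) :
    helicoidPeriod K = 2 * K * ∫ u in 0..π, periodKernel (1 - K * cos (2 * u)) := rfl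

theorem continuousOn_periodKernel : ContinuousOn periodKernel (Ioi 0) := by
  intro x hx
  have : 0 < √x := sqrt_pos.2 hx
  exact (continuousAt_const.div (by fun_prop) (by positivity)).continuousWithinAt

theorem mul_periodKernel_sub_mul_periodKernel {K₁ K₂ c : ℝ} (h₁ : K₁ * c < 1) (h₂ : K₂ * c < 1) :
    K₂ * periodKernel (1 - K₂ * c) - K₁ * periodKernel (1 - K₁ * c) =
      (K₂ - K₁) / (√(1 - K₁ * c) * √(1 - K₂ * c) * (√(1 - K₁ * c) + √(1 - K₂ * c))) := by
  have hs₁ : √(1 - K₁ * c) ^ 2 = 1 - K₁ * c := sq_sqrt (by linarith)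
  have hs₂ : √(1 - K₂ * c) ^ 2 = 1 - K₂ * c := sq_sqrt (by linarith)
  have hs₁_pos : 0 < √(1 - K₁ * c) := sqrt_pos.2 (by linarith)
  have hs₂_pos : 0 < √(1 - K₂ * c) := sqrt_pos.2 (by linarith)
  unfold periodKernel
  generalize √(1 - K₁ * c) = s₁ at *
  generalize √(1 - K₂ * c) = s₂ at *
  rw [mul_one_div, mul_one_div, div_sub_div _ _ (by positivity) (by positivity),
    div_eq_div_iff (by positivity) (by positivity)]
  linear_combination (s₁ * s₂ * (1 + s₁ + s₂)) * (K₂ * hs₁ - K₁ * hs₂)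

theorem strictMonoOn_mul_periodKernel (c : ℝ) :
    StrictMonoOn (fun K => K * periodKernel (1 - K * c)) {K | K * c < 1} := by
  intro K₁ h₁ K₂ h₂ hlt
  have : 0 < √(1 - K₁ * c) := sqrt_pos.2 (sub_pos.2 h₁)
  have : 0 < √(1 - K₂ * c) := sqrt_pos.2 (sub_pos.2 h₂)
  have : 0 < K₂ - K₁ := sub_pos.2 hlt
  refine sub_pos.1 ?_
  rw [mul_periodKernel_sub_mul_periodKernel h₁ h₂]
  positivity

theorem one_sub_mul_cos_pos {K : ℝ} (hK : |K| < 1) (x : ℝ) : 0 < 1 - K * cos x := by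
  have : K * cos x ≤ |K| := by
    calc K * cos x ≤ |K * cos x| := le_abs_self _
      _ ≤ |K| := by rw [abs_mul]; exact mul_le_of_le_one_right (abs_nonneg K) (abs_cos_le_one x)
  linarith

theorem continuous_periodKernel_one_sub_mul_cos {K : ℝ} (hK : |K| < 1) :
    Continuous fun u => periodKernel (1 - K * cos (2 * u)) :=
  continuousOn_periodKernel.comp_continuous (by fun_prop) fun u => one_sub_mul_cos_pos hK _

theorem helicoidPeriod_eq_two_mul_integral (K : ℝ) :
    helicoidPeriod K = 2 * ∫ u in 0..π, K * periodKernel (1 - K * cos (2 * u)) := by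
  rw [helicoidPeriod_eq_mul_integral, integral_const_mul, mul_assoc]

theorem strictMonoOn_helicoidPeriod : StrictMonoOn helicoidPeriod (Ioo (-1) 1) := by
  intro K₁ h₁ K₂ h₂ hlt
  have hK₁ : |K₁| < 1 := abs_lt.2 h₁
  have hK₂ : |K₂| < 1 := abs_lt.2 h₂
  have hpointwise (u : ℝ) :
      K₁ * periodKernel (1 - K₁ * cos (2 * u)) < K₂ * periodKernel (1 - K₂ * cos (2 * u)) :=
    strictMonoOn_mul_periodKernel (cos (2 * u)) (by simpa using one_sub_mul_cos_pos hK₁ (2 * u))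
      (by simpa using one_sub_mul_cos_pos hK₂ (2 * u)) hlt
  rw [helicoidPeriod_eq_two_mul_integral, helicoidPeriod_eq_two_mul_integral]
  gcongr 2 * ?_
  refine integral_lt_integral_of_continuousOn_of_le_of_exists_lt pi_pos
    (continuous_const.mul (continuous_periodKernel_one_sub_mul_cos hK₁)).continuousOn
    (continuous_const.mul (continuous_periodKernel_one_sub_mul_cos hK₂)).continuousOn
    (fun u _ => (hpointwise u).le) ⟨0, ⟨le_rfl, pi_pos.le⟩, hpointwise 0⟩

theorem continuousAt_helicoidPeriod {K₀ : ℝ} (hK₀ : |K₀| < 1) :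
    ContinuousAt helicoidPeriod K₀ := by
  obtain ⟨r, hK₀r, hr⟩ := exists_between hK₀
  -- Clamping `K` to `[-r, r]` keeps `1 - K cos 2u` away from `0`, so the parametric integral is
  -- jointly continuous, and it does not change `helicoidPeriod` near `K₀`.
  set clamp : ℝ → ℝ := fun K => max (-r) (min r K)
  have hclamp (K : ℝ) : |clamp K| < 1 :=
    abs_lt.2 ⟨by linarith [le_max_left (-r) (min r K)],
      by linarith [max_le (neg_le_self ((abs_nonneg K₀).trans hK₀r.le)) (min_le_left r K)]⟩
  have hcont :
      Continuous fun K => 2 * K * ∫ u in 0..π, periodKernel (1 - clamp K * cos (2 * u)) := by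
    refine continuous_const.mul continuous_id |>.mul
      (continuous_parametric_intervalIntegral_of_continuous' ?_ 0 π)
    exact continuousOn_periodKernel.comp_continuous (by fun_prop)
      fun p => one_sub_mul_cos_pos (hclamp p.1) _
  have hnhds : Ioo (-r) r ∈ 𝓝 K₀ :=
    Ioo_mem_nhds (by linarith [neg_abs_le K₀]) (by linarith [le_abs_self K₀])
  refine hcont.continuousAt.congr (eventuallyEq_of_mem hnhds fun K hK => ?_)
  simp only [helicoidPeriod_eq_mul_integral, clamp, min_eq_right hK.2.le, max_eq_right hK.1.le]

theorem continuousOn_helicoidPeriod : ContinuousOn helicoidPeriod (Ioo (-1) 1) :=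
  fun _ hK => (continuousAt_helicoidPeriod (abs_lt.2 hK)).continuousWithinAt

theorem inv_three_mul_sqrt_le_periodKernel {x : ℝ} (hx : 0 < x) (hx4 : x ≤ 4) :
    (3 * √x)⁻¹ ≤ periodKernel x := by
  have hsqrt_pos : 0 < √x := sqrt_pos.2 hx
  have hsqrt_le : √x ≤ 2 := (sqrt_le_left zero_le_two).2 (by linarith)
  rw [periodKernel, one_div]
  exact inv_anti₀ (by positivity) (by nlinarith)

theorem sqrt_one_sub_mul_cos_two_mul_le {K : ℝ} (hK₁ : K ≤ 1) (u : ℝ) :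
    √(1 - K * cos (2 * u)) ≤ √(1 - K) + √2 * |u| := by
  have hcos : cos (2 * u) = 1 - 2 * sin u ^ 2 := by rw [cos_two_mul, cos_sq']; ring
  have hsin : sin u ^ 2 ≤ |u| ^ 2 := by rw [sq_abs]; exact sin_sq_le_sq
  have h₁ := sq_sqrt (sub_nonneg.2 hK₁)
  have h₂ := sq_sqrt zero_le_two
  rw [sqrt_le_left (by positivity), hcos]
  nlinarith [mul_nonneg (mul_nonneg (sqrt_nonneg (1 - K)) (sqrt_nonneg 2)) (abs_nonneg u)]

theorem integral_inv_add_mul {a b T : ℝ} (ha : 0 < a) (hb : 0 < b) (hT : 0 ≤ T) :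
    ∫ u in 0..T, (a + b * u)⁻¹ = b⁻¹ * log (1 + b * T / a) := by
  rw [integral_comp_add_mul (fun x => x⁻¹) hb.ne', integral_inv_of_pos (by simpa using ha)
    (by positivity), smul_eq_mul, mul_zero, add_zero, add_div, div_self ha.ne']

theorem log_le_integral_periodKernel {K : ℝ} (hK₀ : 0 ≤ K) (hK₁ : K < 1) :
    (3 * √2)⁻¹ * log (1 + 3 * √2 * π / (3 * √(1 - K))) ≤
      ∫ u in 0..π, periodKernel (1 - K * cos (2 * u)) := by
  have hK : |K| < 1 := by rwa [abs_of_nonneg hK₀]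
  have ha : 0 < 3 * √(1 - K) := by have := sqrt_pos.2 (sub_pos.2 hK₁); positivity
  rw [← integral_inv_add_mul ha (by positivity) pi_pos.le]
  refine integral_mono_on pi_pos.le (ContinuousOn.intervalIntegrable ?_)
    ((continuous_periodKernel_one_sub_mul_cos hK).intervalIntegrable _ _) fun u hu => ?_
  · exact ContinuousOn.inv₀ (by fun_prop) fun u hu => by
      rw [uIcc_of_le pi_pos.le] at hu
      have := hu.1
      positivity
  · have hx := one_sub_mul_cos_pos hK (2 * u)
    have hsqrt := sqrt_one_sub_mul_cos_two_mul_le hK₁.le u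
    rw [abs_of_nonneg hu.1] at hsqrt
    calc (3 * √(1 - K) + 3 * √2 * u)⁻¹ ≤ (3 * √(1 - K * cos (2 * u)))⁻¹ :=
          inv_anti₀ (by have := sqrt_pos.2 hx; positivity) (by linarith)
      _ ≤ periodKernel (1 - K * cos (2 * u)) :=
          inv_three_mul_sqrt_le_periodKernel hx (by nlinarith [neg_one_le_cos (2 * u)])

theorem tendsto_integral_periodKernel_atTop :
    Tendsto (fun K => ∫ u in 0..π, periodKernel (1 - K * cos (2 * u))) (𝓝[<] 1) atTop := by
  have ha : Tendsto (fun K => 3 * √(1 - K)) (𝓝[<] 1) (𝓝[>] 0) := by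
    refine tendsto_nhdsWithin_iff.2 ⟨?_, eventually_nhdsWithin_of_forall fun K hK => ?_⟩
    · have : Continuous fun K : ℝ => 3 * √(1 - K) := by fun_prop
      simpa using (this.tendsto 1).mono_left nhdsWithin_le_nhds
    · have := sqrt_pos.2 (sub_pos.2 (mem_Iio.1 hK))
      exact mem_Ioi.2 (by positivity)
  have hbound : Tendsto (fun K => (3 * √2)⁻¹ * log (1 + 3 * √2 * π / (3 * √(1 - K))))
      (𝓝[<] 1) atTop := by
    refine (tendsto_log_atTop.comp (tendsto_atTop_add_const_left _ 1 ?_)).const_mul_atTop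
      (by positivity)
    simpa only [Function.comp_def, div_eq_mul_inv] using
      (tendsto_inv_nhdsGT_zero.comp ha).const_mul_atTop (by positivity : 0 < 3 * √2 * π)
  refine tendsto_atTop_mono' _ ?_ hbound
  filter_upwards [Ioo_mem_nhdsLT zero_lt_one] with K hK
  exact log_le_integral_periodKernel hK.1.le hK.2

theorem tendsto_helicoidPeriod_atTop : Tendsto helicoidPeriod (𝓝[<] 1) atTop := by
  have h : Tendsto (fun K : ℝ => 2 * K) (𝓝[<] 1) (𝓝 2) :=
    ((continuous_const_mul 2).tendsto' 1 2 (mul_one 2)).mono_left nhdsWithin_le_nhds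
  exact h.pos_mul_atTop two_pos tendsto_integral_periodKernel_atTop

theorem ContinuousOn.surjOn_Ici_of_tendsto_atTop {α δ : Type*}
    [ConditionallyCompleteLinearOrder α] [TopologicalSpace α] [OrderTopology α]
    [DenselyOrdered α]
    [LinearOrder δ] [TopologicalSpace δ] [OrderClosedTopology δ] [NoMaxOrder δ]
    {f : α → δ} {a b : α} (hab : a < b) (hf : ContinuousOn f (Ico a b))
    (hlim : Tendsto f (𝓝[<] b) atTop) : SurjOn f (Ico a b) (Ici (f a)) := by
  intro y hy
  have := nhdsLT_neBot_of_exists_lt ⟨a, hab⟩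
  obtain ⟨c, hyc, hc⟩ := ((hlim.eventually_gt_atTop y).and (Ioo_mem_nhdsLT hab)).exists
  obtain ⟨x, hx, rfl⟩ :=
    intermediate_value_Ico hc.1.le (hf.mono (Icc_subset_Ico_right hc.2)) ⟨hy, hyc⟩
  exact ⟨x, Ico_subset_Ico_right hc.2.le hx, rfl⟩

theorem helicoidPeriod_bijective :
    StrictMonoOn helicoidPeriod (Set.Ico (0 : ℝ) 1) ∧
    helicoidPeriod 0 = 0 ∧
    Filter.Tendsto helicoidPeriod (nhdsWithin 1 (Set.Iio 1)) Filter.atTop ∧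
    Set.BijOn helicoidPeriod (Set.Ico (0 : ℝ) 1) (Set.Ici (0 : ℝ)) := by
  have hIco : Ico (0 : ℝ) 1 ⊆ Ioo (-1) 1 := Ico_subset_Ioo_left neg_one_lt_zero
  have hmono := strictMonoOn_helicoidPeriod.mono hIco
  have hzero : helicoidPeriod 0 = 0 := by simp [helicoidPeriod]
  refine ⟨hmono, hzero, tendsto_helicoidPeriod_atTop, ?_, hmono.injOn, ?_⟩
  · exact fun K hK => hzero ▸ hmono.monotoneOn (left_mem_Ico.2 one_pos) hK hK.1
  · have hsurj := (continuousOn_helicoidPeriod.mono hIco).surjOn_Ici_of_tendsto_atTop one_pos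
      tendsto_helicoidPeriod_atTop
    rwa [hzero] at hsurj
end

section
/- Let α ∈ (-1,1), ρ satisfy ρ' = √(1 - α² sin²(2ρ)), ρ(0) = 0, and V > 0 with ρ(V) = π. Then ρ(-v + V/2) = -ρ(v) + π/2 for all v ∈ ℝ; in particular ρ(V/4) = π/4 and ρ(3V/4) = 3π/4. -/
/-!
The right-hand side `F y = √(1 - α² sin² (2y))` is invariant under `y ↦ π - y` and
`y ↦ π/2 - y`, and it is Lipschitz because it stays above `√(1 - α²) > 0`. Hence
`v ↦ π - ρ (V - v)` and `v ↦ π/2 - ρ (V/2 - v)` solve `ρ' = F ρ`, and by uniqueness they equal `ρ`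
once they agree with it at `0`: for the first this is `ρ V = π`, and the first identity at `V/2`
gives `ρ (V/2) = π/2`, which is what the second needs.
-/

open Real NNReal

theorem Real.sin_sq_sub_sin_sq (x y : ℝ) : sin x ^ 2 - sin y ^ 2 = sin (x + y) * sin (x - y) := by
  rw [sin_add, sin_sub]
  linear_combination sin y ^ 2 * sin_sq_add_cos_sq x - sin x ^ 2 * sin_sq_add_cos_sq y

theorem Real.lipschitzWith_sin_sq : LipschitzWith 1 fun x ↦ sin x ^ 2 := by
  refine LipschitzWith.of_dist_le_mul fun x y ↦ ?_
  rw [Real.dist_eq, Real.dist_eq, sin_sq_sub_sin_sq, abs_mul, NNReal.coe_one]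
  exact mul_le_mul (abs_sin_le_one _) abs_sin_le_abs (abs_nonneg _) zero_le_one

theorem LipschitzWith.sqrt {X : Type*} [PseudoMetricSpace X] {f : X → ℝ} {K m : ℝ≥0}
    (hm : 0 < m) (hf : LipschitzWith K f) (hfm : ∀ x, m ≤ f x) :
    LipschitzWith (K / (2 * NNReal.sqrt m)) fun x ↦ √(f x) := by
  refine LipschitzWith.of_dist_le_mul fun x y ↦ ?_
  have hf0 (x : X) : 0 ≤ f x := m.2.trans (hfm x)
  have hsqrt (x : X) : √m ≤ √(f x) := Real.sqrt_le_sqrt (hfm x)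
  have hdiff : dist √(f x) √(f y) * (√(f x) + √(f y)) = dist (f x) (f y) := by
    rw [Real.dist_eq, Real.dist_eq, ← abs_of_nonneg (by positivity : 0 ≤ √(f x) + √(f y)),
      ← abs_mul]
    congr 1
    linear_combination Real.sq_sqrt (hf0 x) - Real.sq_sqrt (hf0 y)
  rw [NNReal.coe_div, NNReal.coe_mul, Real.coe_sqrt, NNReal.coe_two, div_mul_eq_mul_div,
    le_div_iff₀ (by positivity)]
  calc dist √(f x) √(f y) * (2 * √m)
      ≤ dist √(f x) √(f y) * (√(f x) + √(f y)) := by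
        gcongr
        linarith [hsqrt x, hsqrt y]
    _ = dist (f x) (f y) := hdiff
    _ ≤ K * dist x y := hf.dist_le_mul x y

theorem ODE_solution_reflection {E : Type*} [NormedAddCommGroup E] [NormedSpace ℝ E]
    {F : E → E} {K : ℝ≥0} (hF : LipschitzWith K F) {c : E} (hFc : ∀ y, F (c - y) = F y)
    {ρ : ℝ → E} (hρ : ∀ t, HasDerivAt ρ (F (ρ t)) t) {a : ℝ} (ha : ρ a = c - ρ 0) (t : ℝ) :
    ρ (a - t) = c - ρ t := by
  have hreflect (t : ℝ) : HasDerivAt (fun t ↦ c - ρ (a - t)) (F (c - ρ (a - t))) t := by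
    have := ((hρ (a - t)).scomp t ((hasDerivAt_id t).const_sub a)).const_sub c
    simpa [hFc] using this
  have := ODE_solution_unique_univ (v := fun _ ↦ F) (s := fun _ ↦ Set.univ) (t₀ := 0)
    (fun _ ↦ hF.lipschitzOnWith) (fun t ↦ ⟨hρ t, trivial⟩) (fun t ↦ ⟨hreflect t, trivial⟩)
    (by simp [ha])
  rw [congrFun this t, sub_sub_cancel]

noncomputable def catenoidField (α y : ℝ) : ℝ := √(1 - α ^ 2 * sin (2 * y) ^ 2)

theorem lipschitzWith_catenoidField {α : ℝ} (hα : α ^ 2 < 1) :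
    ∃ K, LipschitzWith K (catenoidField α) := by
  have hinner : LipschitzWith 2 fun y ↦ 1 - α ^ 2 * sin (2 * y) ^ 2 := by
    refine LipschitzWith.of_dist_le_mul fun x y ↦ ?_
    have hsin := lipschitzWith_sin_sq.dist_le_mul (2 * y) (2 * x)
    rw [Real.dist_eq, Real.dist_eq, NNReal.coe_one] at hsin
    rw [Real.dist_eq, Real.dist_eq]
    calc |1 - α ^ 2 * sin (2 * x) ^ 2 - (1 - α ^ 2 * sin (2 * y) ^ 2)|
        = |α ^ 2 * (sin (2 * y) ^ 2 - sin (2 * x) ^ 2)| := by ring_nf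
      _ = α ^ 2 * |sin (2 * y) ^ 2 - sin (2 * x) ^ 2| := by rw [abs_mul, abs_sq]
      _ ≤ 1 * (1 * |2 * y - 2 * x|) := by gcongr
      _ = 2 * |x - y| := by
          rw [← mul_sub, abs_mul, abs_sub_comm]
          norm_num
  have hbound (y : ℝ) : ((1 - α ^ 2).toNNReal : ℝ) ≤ 1 - α ^ 2 * sin (2 * y) ^ 2 := by
    rw [Real.coe_toNNReal _ (by linarith)]
    linarith [mul_le_of_le_one_right (sq_nonneg α) (sin_sq_le_one (2 * y))]
  exact ⟨_, hinner.sqrt (by simpa using hα) hbound⟩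

theorem catenoidField_pi_sub (α y : ℝ) : catenoidField α (π - y) = catenoidField α y := by
  rw [catenoidField, catenoidField, mul_sub, sin_two_pi_sub, neg_sq]

theorem catenoidField_pi_div_two_sub (α y : ℝ) :
    catenoidField α (π / 2 - y) = catenoidField α y := by
  rw [catenoidField, catenoidField, show 2 * (π / 2 - y) = π - 2 * y by ring, sin_pi_sub]

theorem catenoid_rho_reflection_general
    (α : ℝ) (hα : α ∈ Set.Ioo (-1 : ℝ) 1) (ρ : ℝ → ℝ)
    (hρ : ∀ v : ℝ, HasDerivAt ρ (Real.sqrt (1 - α ^ 2 * Real.sin (2 * ρ v) ^ 2)) v)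
    (hρ0 : ρ 0 = 0) (V : ℝ) (hρV : ρ V = Real.pi) :
    (∀ v : ℝ, ρ (-v + V / 2) = -ρ v + Real.pi / 2) ∧
    ρ (V / 4) = Real.pi / 4 ∧ ρ (3 * V / 4) = 3 * Real.pi / 4 := by
  obtain ⟨K, hK⟩ := lipschitzWith_catenoidField ((sq_lt_one_iff_abs_lt_one α).2 (abs_lt.2 hα))
  have hρ' : ∀ v, HasDerivAt ρ (catenoidField α (ρ v)) v := hρ
  have hsymm (v : ℝ) : ρ (V - v) = π - ρ v :=
    ODE_solution_reflection hK (catenoidField_pi_sub α) hρ' (by rw [hρV, hρ0, sub_zero]) v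
  have hhalf : ρ (V / 2) = π / 2 := by
    have := hsymm (V / 2)
    rw [sub_half] at this
    linarith
  have hsymm_half (v : ℝ) : ρ (V / 2 - v) = π / 2 - ρ v :=
    ODE_solution_reflection hK (catenoidField_pi_div_two_sub α) hρ'
      (by rw [hhalf, hρ0, sub_zero]) v
  have hquarter : ρ (V / 4) = π / 4 := by
    have := hsymm_half (V / 4)
    rw [show V / 2 - V / 4 = V / 4 by ring] at this
    linarith
  refine ⟨fun v ↦ ?_, hquarter, ?_⟩
  · rw [neg_add_eq_sub, hsymm_half, neg_add_eq_sub]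
  · have := hsymm (3 * V / 4)
    rw [show V - 3 * V / 4 = V / 4 by ring, hquarter] at this
    linarith

theorem catenoid_rho_reflection
    (α : ℝ) (hα : α ∈ Set.Ioo (-1 : ℝ) 1) (ρ : ℝ → ℝ)
    (hρ : ∀ v : ℝ, HasDerivAt ρ (Real.sqrt (1 - α ^ 2 * Real.sin (2 * ρ v) ^ 2)) v)
    (hρ0 : ρ 0 = 0) (V : ℝ) (hV : 0 < V) (hρV : ρ V = Real.pi) :
    (∀ v : ℝ, ρ (-v + V / 2) = -ρ v + Real.pi / 2) ∧
    ρ (V / 4) = Real.pi / 4 ∧ ρ (3 * V / 4) = 3 * Real.pi / 4 :=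
  catenoid_rho_reflection_general α hα ρ hρ hρ0 V hρV
end

section
/- Let α ∈ (-1,1), ρ as above with period identity ρ(v+V) = ρ(v)+π, and define F(v) = α² ∫₀^v sin(2ρ(s))/(1 + ρ'(s)) ds. Then F is even and F(v + V) = F(v) for all v ∈ ℝ; in particular ∫₀^V sin(2ρ(s))/(1 + ρ'(s)) ds = 0. -/
/-! The right-hand side of `ρ' = √(1 - α² sin² 2ρ)` is an even function of `ρ`, Lipschitz because
`|α| < 1` keeps the radicand above `1 - α² > 0`; so `ρ` and `-ρ(-·)` solve the same initial value
problem and `ρ` is odd. The integrand `sin 2ρ / (1 + ρ')` is then odd, and `V`-periodic because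
`ρ(v + V) = ρ(v) + π`. An odd `V`-periodic function has zero integral over `[0, V]`: periodicity
gives `∫₀^V = ∫_{-V}^0` and oddness gives `∫_{-V}^0 = -∫₀^V`. Finally `F` is even as the primitive
of an odd function, and `V`-periodic because its increment over a period is that integral. -/

open Real Set Function intervalIntegral

section ODE

variable {E : Type*} [NormedAddCommGroup E] [NormedSpace ℝ E]

theorem ODE_solution_odd_of_even {f : E → E} {K : NNReal} (hf : LipschitzWith K f)
    (heven : f.Even) {ρ : ℝ → E} (hρ : ∀ t, HasDerivAt ρ (f (ρ t)) t) (h0 : ρ 0 = 0) :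
    ρ.Odd := by
  have hreflected : ∀ t, HasDerivAt (fun s ↦ -ρ (-s)) (f (-ρ (-t))) t := fun t ↦ by
    have h := ((hρ (-t)).scomp t (hasDerivAt_neg t)).neg
    rwa [neg_one_smul, neg_neg, ← heven.eq] at h
  have key : ρ = fun s ↦ -ρ (-s) :=
    ODE_solution_unique_univ (v := fun _ ↦ f) (s := fun _ ↦ univ) (t₀ := 0)
      (fun _ ↦ hf.lipschitzOnWith) (fun t ↦ ⟨hρ t, trivial⟩) (fun t ↦ ⟨hreflected t, trivial⟩)
      (by simp [h0])
  intro t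
  rw [congrFun key (-t), neg_neg]

end ODE

section OddPeriodic

variable {E : Type*} [NormedAddCommGroup E] [NormedSpace ℝ E] {G : ℝ → E}

theorem Function.Odd.intervalIntegral_zero_neg (hG : G.Odd) (v : ℝ) :
    ∫ s in 0..-v, G s = ∫ s in 0..v, G s := by
  rw [integral_symm, ← neg_zero, ← integral_comp_neg, ← integral_neg]
  simp_rw [hG.eq, neg_neg, neg_zero]

theorem Function.Periodic.intervalIntegral_eq_zero_of_odd {T : ℝ} (hper : Periodic G T)
    (hodd : G.Odd) : ∫ s in 0..T, G s = 0 := by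
  have h := hper.intervalIntegral_add_eq (-T) 0
  rw [neg_add_cancel, zero_add, integral_symm, hodd.intervalIntegral_zero_neg] at h
  have := IsAddTorsionFree.of_isTorsionFree ℝ E
  exact self_eq_neg.mp h.symm

end OddPeriodic

noncomputable def catenoidSpeed (α y : ℝ) : ℝ := √(1 - α ^ 2 * sin (2 * y) ^ 2)

noncomputable def catenoidIntegrand (α y : ℝ) : ℝ := sin (2 * y) / (1 + catenoidSpeed α y)

theorem catenoidSpeed_even (α : ℝ) : (catenoidSpeed α).Even := fun y ↦ by
  simp [catenoidSpeed, mul_neg, sin_neg]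

theorem one_sub_sq_le_one_sub_sq_mul_sin_sq (α x : ℝ) : 1 - α ^ 2 ≤ 1 - α ^ 2 * sin x ^ 2 := by
  nlinarith [sin_sq_le_one x, sq_nonneg α]

theorem hasDerivAt_catenoidSpeed {α : ℝ} (hα : α ^ 2 < 1) (y : ℝ) :
    HasDerivAt (catenoidSpeed α) (-(α ^ 2 * sin (4 * y)) / catenoidSpeed α y) y := by
  have hpos : 0 < 1 - α ^ 2 * sin (2 * y) ^ 2 := by
    linarith [one_sub_sq_le_one_sub_sq_mul_sin_sq α (2 * y)]
  have hsin : HasDerivAt (fun y ↦ sin (2 * y)) (cos (2 * y) * 2) y :=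
    (hasDerivAt_sin _).comp y ((hasDerivAt_id y).const_mul 2 |>.congr_deriv (mul_one 2))
  refine (((hsin.pow 2).const_mul (α ^ 2)).const_sub 1 |>.sqrt hpos.ne').congr_deriv ?_
  rw [show sin (4 * y) = 2 * sin (2 * y) * cos (2 * y) by rw [← sin_two_mul]; ring_nf]
  simp only [catenoidSpeed, Pi.pow_apply]
  field_simp
  ring

theorem abs_deriv_catenoidSpeed_le {α : ℝ} (hα : α ^ 2 < 1) (y : ℝ) :
    |deriv (catenoidSpeed α) y| ≤ α ^ 2 / √(1 - α ^ 2) := by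
  have hmin : 0 < √(1 - α ^ 2) := sqrt_pos.mpr (by linarith)
  have hle : √(1 - α ^ 2) ≤ catenoidSpeed α y :=
    sqrt_le_sqrt (one_sub_sq_le_one_sub_sq_mul_sin_sq α (2 * y))
  have hspos : 0 < catenoidSpeed α y := hmin.trans_le hle
  rw [(hasDerivAt_catenoidSpeed hα y).deriv, abs_div, abs_neg, abs_mul,
    abs_of_nonneg (sq_nonneg α), abs_of_pos hspos]
  calc α ^ 2 * |sin (4 * y)| / catenoidSpeed α y ≤ α ^ 2 * 1 / catenoidSpeed α y := by
        gcongr; exact abs_sin_le_one _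
    _ ≤ α ^ 2 / √(1 - α ^ 2) := by rw [mul_one]; gcongr

theorem lipschitzWith_catenoidSpeed {α : ℝ} (hα : α ^ 2 < 1) :
    ∃ K, LipschitzWith K (catenoidSpeed α) :=
  ⟨(α ^ 2 / √(1 - α ^ 2)).toNNReal, lipschitzWith_of_nnnorm_deriv_le
    (fun y ↦ (hasDerivAt_catenoidSpeed hα y).differentiableAt) fun y ↦ by
      rw [← NNReal.coe_le_coe, coe_nnnorm, Real.coe_toNNReal _ (by positivity), norm_eq_abs]
      exact abs_deriv_catenoidSpeed_le hα y⟩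

theorem catenoidIntegrand_odd (α : ℝ) : (catenoidIntegrand α).Odd := fun y ↦ by
  rw [catenoidIntegrand, catenoidIntegrand, catenoidSpeed_even, mul_neg, sin_neg, neg_div]

theorem catenoidIntegrand_periodic (α : ℝ) : Periodic (catenoidIntegrand α) π := fun y ↦ by
  simp only [catenoidIntegrand, catenoidSpeed, mul_add, sin_add_two_pi]

theorem continuous_catenoidIntegrand (α : ℝ) : Continuous (catenoidIntegrand α) := by
  unfold catenoidIntegrand catenoidSpeed
  exact Continuous.div (by fun_prop) (by fun_prop) fun y ↦ by positivity

theorem catenoid_F_even_periodic_general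
    (α : ℝ) (hα : α ∈ Set.Ioo (-1 : ℝ) 1) (ρ : ℝ → ℝ)
    (hρ : ∀ v : ℝ, HasDerivAt ρ (Real.sqrt (1 - α ^ 2 * Real.sin (2 * ρ v) ^ 2)) v)
    (hρ0 : ρ 0 = 0) (V : ℝ)
    (hper : ∀ v : ℝ, ρ (v + V) = ρ v + Real.pi)
    (F : ℝ → ℝ)
    (hF : ∀ v : ℝ, F v = α ^ 2 * ∫ s in (0 : ℝ)..v,
      Real.sin (2 * ρ s) / (1 + Real.sqrt (1 - α ^ 2 * Real.sin (2 * ρ s) ^ 2))) :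
    (∀ v : ℝ, F (-v) = F v) ∧ (∀ v : ℝ, F (v + V) = F v) ∧
    (∫ s in (0 : ℝ)..V,
      Real.sin (2 * ρ s) / (1 + Real.sqrt (1 - α ^ 2 * Real.sin (2 * ρ s) ^ 2))) = 0 := by
  obtain ⟨K, hK⟩ := lipschitzWith_catenoidSpeed (α := α) (by nlinarith [hα.1, hα.2])
  have hρ_odd : ρ.Odd := ODE_solution_odd_of_even hK (catenoidSpeed_even α) hρ hρ0
  set G : ℝ → ℝ := catenoidIntegrand α ∘ ρ
  change (∀ v, F v = α ^ 2 * ∫ s in 0..v, G s) at hF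
  have hG_odd : G.Odd := (catenoidIntegrand_odd α).comp_odd hρ_odd
  have hG_periodic : Periodic G V := fun s ↦ by
    simp only [G, comp_apply, hper s, catenoidIntegrand_periodic α (ρ s)]
  have hG_integrable : ∀ a b, IntervalIntegrable G MeasureTheory.volume a b := fun a b ↦
    ((continuous_catenoidIntegrand α).comp
      (continuous_iff_continuousAt.mpr fun v ↦ (hρ v).continuousAt)).intervalIntegrable a b
  have hG_period : ∫ s in 0..V, G s = 0 := hG_periodic.intervalIntegral_eq_zero_of_odd hG_odd
  refine ⟨fun v ↦ ?_, fun v ↦ ?_, hG_period⟩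
  · rw [hF, hF, hG_odd.intervalIntegral_zero_neg]
  · rw [hF, hF, hG_periodic.intervalIntegral_add_eq_add 0 v hG_integrable, zero_add, hG_period,
      add_zero]

theorem catenoid_F_even_periodic
    (α : ℝ) (hα : α ∈ Set.Ioo (-1 : ℝ) 1) (ρ : ℝ → ℝ)
    (hρ : ∀ v : ℝ, HasDerivAt ρ (Real.sqrt (1 - α ^ 2 * Real.sin (2 * ρ v) ^ 2)) v)
    (hρ0 : ρ 0 = 0) (V : ℝ) (hV : 0 < V) (hρV : ρ V = Real.pi)
    (hper : ∀ v : ℝ, ρ (v + V) = ρ v + Real.pi)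
    (F : ℝ → ℝ)
    (hF : ∀ v : ℝ, F v = α ^ 2 * ∫ s in (0 : ℝ)..v,
      Real.sin (2 * ρ s) / (1 + Real.sqrt (1 - α ^ 2 * Real.sin (2 * ρ s) ^ 2))) :
    (∀ v : ℝ, F (-v) = F v) ∧ (∀ v : ℝ, F (v + V) = F v) ∧
    (∫ s in (0 : ℝ)..V,
      Real.sin (2 * ρ s) / (1 + Real.sqrt (1 - α ^ 2 * Real.sin (2 * ρ s) ^ 2))) = 0 :=
  catenoid_F_even_periodic_general α hα ρ hρ hρ0 V hper F hF
end
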